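/- arXiv:2509.06702 — 2 statements merged into one kernel-verified Lean document; each statement's English description precedes it below -/
import Mathlib

section
/- Let f : ℝ^d × {1, …, T} → ℝ be bounded and L-Lipschitz in its first argument, uniformly in the time argument. For a Borel probability measure μ on ℝ^{dT} with finite second moment, define the optimal stopping value v(μ) = sup over stopping times τ (taking values in {1, …, T} and adapted to the coordinate filtration of the canonical process X under μ) of E_{X∼μ}[f(X_τ, τ)]. Then for all such μ, ν: |v(μ) − v(ν)| ≤ L · AW₂(μ, ν). -/
/-!
Let `V` be the Snell envelope of the payoff under `ν`, obtained by backward induction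
`V t = max (f t) (E_ν[V (t + 1) | 𝓕 t])`. Given a bicausal coupling `π` of `μ` and `ν` and a
stopping time `τ` of the first coordinate, causality says that conditioning a function of `Y`
on the joint past of `(X, Y)` is the same as conditioning on the past of `Y` alone, so `V (Y)`
is still a supermartingale for the joint filtration and `E_π[f (Y_τ, τ)] ≤ E_ν[V 0]`. The first
time `f` touches `V` is a stopping time attaining `E_ν[V 0]`, hence `E_ν[V 0] ≤ v(ν)`. The
Lipschitz bound and Jensen's inequality give
`E_π[f (X_τ, τ)] ≤ E_π[f (Y_τ, τ)] + L √(E_π ‖X - Y‖²)`; taking the supremum over `τ`, the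
infimum over `π`, and exchanging `μ` and `ν` gives the claim.
-/

-- Times are indexed by `Fin T` (0-based: index `t` is the paper's time `t + 1`), so a stopping
-- time `τ` is adapted iff `{τ = t}` is measurable for the σ-algebra of the first `t + 1`
-- coordinates.
open MeasureTheory ProbabilityTheory

/-- Path space: `d`-dimensional paths with `T` time steps. -/
abbrev PathSp (d T : ℕ) := Fin T → (Fin d → ℝ)

/-- A coupling of two measures. -/
def Coupling {α β : Type*} [MeasurableSpace α] [MeasurableSpace β]
    (π : Measure (α × β)) (μ : Measure α) (ν : Measure β) : Prop :=
  π.map Prod.fst = μ ∧ π.map Prod.snd = ν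

/-- σ-algebra on a path space generated by the first `t` coordinates. -/
def prefixSigma (E : Type*) [MeasurableSpace E] (T t : ℕ) :
    MeasurableSpace (Fin T → E) :=
  MeasurableSpace.comap (fun x (s : {s : Fin T // (s : ℕ) < t}) => x s) inferInstance

/-- Bicausality of a coupling, expressed through conditional expectations of bounded
measurable test functions. -/
def Bicausal {E : Type*} [MeasurableSpace E] {T : ℕ}
    (π : Measure ((Fin T → E) × (Fin T → E))) (μ ν : Measure (Fin T → E)) : Prop :=
  Coupling π μ ν ∧
  ∀ t : ℕ, 1 ≤ t → t ≤ T - 1 →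
    (∀ f : (Fin T → E) → ℝ, Measurable f → (∃ C, ∀ x, |f x| ≤ C) →
      π[fun p => f p.1 |
          ((prefixSigma E T t).comap Prod.fst) ⊔ ((prefixSigma E T t).comap Prod.snd)]
        =ᵐ[π] π[fun p => f p.1 | (prefixSigma E T t).comap Prod.fst]) ∧
    (∀ g : (Fin T → E) → ℝ, Measurable g → (∃ C, ∀ y, |g y| ≤ C) →
      π[fun p => g p.2 |
          ((prefixSigma E T t).comap Prod.fst) ⊔ ((prefixSigma E T t).comap Prod.snd)]
        =ᵐ[π] π[fun p => g p.2 | (prefixSigma E T t).comap Prod.snd])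

/-- Squared adapted Wasserstein-2 distance. -/
noncomputable def AW2sq {d T : ℕ} (μ ν : Measure (PathSp d T)) : ℝ :=
  sInf {r | ∃ π : Measure (PathSp d T × PathSp d T),
    Bicausal π μ ν ∧ r = ∫ p, ∑ t, ∑ i, (p.1 t i - p.2 t i) ^ 2 ∂π}

/-- Adapted Wasserstein-2 distance. -/
noncomputable def AW2 {d T : ℕ} (μ ν : Measure (PathSp d T)) : ℝ :=
  Real.sqrt (AW2sq μ ν)

/-- Finite second moment. -/
def FinSndMoment {d T : ℕ} (μ : Measure (PathSp d T)) : Prop :=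
  Integrable (fun x => ∑ t, ∑ i, (x t i) ^ 2) μ

/-- A stopping time on path space: `{τ = t}` depends only on the first `t+1`
coordinates (adapted to the coordinate filtration). -/
def IsStoppingTimePath {d T : ℕ} (τ : PathSp d T → Fin T) : Prop :=
  ∀ t : Fin T, MeasurableSet[prefixSigma (Fin d → ℝ) T ((t : ℕ) + 1)] {x | τ x = t}

/-- Optimal stopping value `v(μ) = sup_τ E_{X∼μ}[f(X_τ, τ)]`. -/
noncomputable def stopValue {d T : ℕ} (f : (Fin d → ℝ) → Fin T → ℝ)
    (μ : Measure (PathSp d T)) : ℝ :=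
  sSup {r | ∃ τ : PathSp d T → Fin T, IsStoppingTimePath τ ∧
    r = ∫ x, f (x (τ x)) (τ x) ∂μ}

namespace MeasureTheory

section ConditionalExpectation

variable {α β : Type*} {n : MeasurableSpace α} {m m₁ m₂ : MeasurableSpace β}
  {mα : MeasurableSpace α} {mβ : MeasurableSpace β}

theorem condExp_comp_ae_eq {μ : Measure α} [IsFiniteMeasure μ] {ν : Measure β}
    {φ : α → β} (hφ : Measurable φ) (hμν : μ.map φ = ν) (hm : m ≤ mβ)
    {g : β → ℝ} (hg : Integrable g ν) :
    μ[fun a => g (φ a) | m.comap φ] =ᵐ[μ] fun a => ν[g | m] (φ a) := by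
  subst hμν
  have hcond : Integrable (fun a => (μ.map φ)[g | m] (φ a)) μ :=
    (integrable_map_measure integrable_condExp.aestronglyMeasurable hφ.aemeasurable).mp
      integrable_condExp
  refine (ae_eq_condExp_of_forall_setIntegral_eq (hφ.mono le_rfl hm).comap_le
    ((integrable_map_measure hg.aestronglyMeasurable hφ.aemeasurable).mp hg)
    (fun s _ _ => hcond.integrableOn) ?_ ?_).symm
  · rintro _ ⟨A, hA, rfl⟩ -
    rw [← setIntegral_map (hm A hA) integrable_condExp.aestronglyMeasurable hφ.aemeasurable,
      setIntegral_condExp hm hg hA,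
      setIntegral_map (hm A hA) hg.aestronglyMeasurable hφ.aemeasurable]
    rfl
  · exact (stronglyMeasurable_condExp.comp_measurable
      (Measurable.of_comap_le le_rfl)).aestronglyMeasurable

theorem condExp_comp_ae_eq_of_ae_eq {μ : Measure α} [IsFiniteMeasure μ] {ν : Measure β}
    {φ : α → β} (hφ : Measurable φ) (hμν : μ.map φ = ν) (hm₁ : m₁ ≤ mβ) (hm₂ : m₂ ≤ mβ)
    {g : β → ℝ} (hg : Integrable g ν) (h : ν[g | m₁] =ᵐ[ν] ν[g | m₂]) :
    μ[fun a => g (φ a) | m₁.comap φ] =ᵐ[μ] μ[fun a => g (φ a) | m₂.comap φ] := by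
  have h' : (fun a => ν[g | m₁] (φ a)) =ᵐ[μ] fun a => ν[g | m₂] (φ a) :=
    ae_of_ae_map (p := fun y => ν[g | m₁] y = ν[g | m₂] y) hφ.aemeasurable (by rwa [hμν])
  exact (condExp_comp_ae_eq hφ hμν hm₁ hg).trans
    (h'.trans (condExp_comp_ae_eq hφ hμν hm₂ hg).symm)

omit mα in
theorem setIntegral_eq_of_isPiSystem {m m0 : MeasurableSpace α} {μ : Measure[m0] α}
    {f g : α → ℝ} (hm : m ≤ m0) {s : Set (Set α)} (h_eq : m = MeasurableSpace.generateFrom s)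
    (h_inter : IsPiSystem s) (hf : Integrable f μ) (hg : Integrable g μ)
    (h_univ : ∫ x, f x ∂μ = ∫ x, g x ∂μ) (basic : ∀ t ∈ s, ∫ x in t, f x ∂μ = ∫ x in t, g x ∂μ)
    {t : Set α} (ht : MeasurableSet[m] t) : ∫ x in t, f x ∂μ = ∫ x in t, g x ∂μ := by
  induction t, ht using MeasurableSpace.induction_on_inter h_eq h_inter with
  | empty => simp
  | basic t ht => exact basic t ht
  | compl t ht ih =>
    have := integral_add_compl (hm t ht) hf
    have := integral_add_compl (hm t ht) hg
    linarith
  | iUnion t hdisj ht ih =>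
    rw [integral_iUnion (fun i => hm _ (ht i)) hdisj hf.integrableOn,
      integral_iUnion (fun i => hm _ (ht i)) hdisj hg.integrableOn]
    exact tsum_congr ih

theorem condExp_comp_fst_prod_ae_eq {μ : Measure α} {ν : Measure β} [IsFiniteMeasure μ]
    [IsFiniteMeasure ν] (hn : n ≤ mα) (hm : m ≤ mβ) {F : α → ℝ} (hF : Integrable F μ) :
    (μ.prod ν)[fun p => F p.1 | n.comap Prod.fst ⊔ m.comap Prod.snd]
      =ᵐ[μ.prod ν] fun p => μ[F | n] p.1 := by
  have hle : n.comap Prod.fst ⊔ m.comap Prod.snd ≤ (inferInstance : MeasurableSpace (α × β)) :=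
    sup_le_sup (MeasurableSpace.comap_mono hn) (MeasurableSpace.comap_mono hm)
  have hcond : Integrable (fun p : α × β => μ[F | n] p.1) (μ.prod ν) :=
    integrable_condExp.comp_fst ν
  have hrect : ∀ A B, MeasurableSet[n] A → MeasurableSet[m] B →
      ∫ p in A ×ˢ B, μ[F | n] p.1 ∂(μ.prod ν) = ∫ p in A ×ˢ B, F p.1 ∂(μ.prod ν) := by
    intro A B hA _
    have hprod : ∀ G : α → ℝ,
        ∫ p in A ×ˢ B, G p.1 ∂(μ.prod ν) = (∫ x in A, G x ∂μ) * ν.real B := fun G => by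
      simpa using setIntegral_prod_mul G (fun _ => (1 : ℝ)) A B
    rw [hprod, hprod, setIntegral_condExp hn hF hA]
  refine (ae_eq_condExp_of_forall_setIntegral_eq hle (hF.comp_fst ν)
    (fun _ _ _ => hcond.integrableOn) (fun s hs _ => ?_) ?_).symm
  · refine setIntegral_eq_of_isPiSystem hle (@generateFrom_prod α β n m).symm
      (@isPiSystem_prod α β n m) hcond (hF.comp_fst ν) ?_ ?_ hs
    · simpa using hrect _ _ MeasurableSet.univ MeasurableSet.univ
    · rintro _ ⟨A, hA, B, hB, rfl⟩
      exact hrect A B hA hB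
  · exact (stronglyMeasurable_condExp.comp_measurable
      (@measurable_fst _ _ n m)).aestronglyMeasurable

end ConditionalExpectation

theorem integral_le_integral_add_mul_sqrt {α : Type*} [MeasurableSpace α] {μ : Measure α}
    [IsProbabilityMeasure μ] {a b S : α → ℝ} {L : ℝ} (hL : 0 ≤ L) (ha : Integrable a μ)
    (hb : Integrable b μ) (hS : Integrable S μ) (hS0 : ∀ x, 0 ≤ S x)
    (hab : ∀ x, a x - b x ≤ L * √(S x)) :
    ∫ x, a x ∂μ ≤ ∫ x, b x ∂μ + L * √(∫ x, S x ∂μ) := by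
  have hsqrt : Integrable (fun x => √(S x)) μ := by
    refine ((integrable_const 1).add hS).mono'
      (Real.continuous_sqrt.comp_aestronglyMeasurable hS.aestronglyMeasurable)
      (ae_of_all _ fun x => ?_)
    rw [Real.norm_of_nonneg (Real.sqrt_nonneg _), Pi.add_apply]
    nlinarith [Real.sq_sqrt (hS0 x), Real.sqrt_nonneg (S x)]
  have hjensen : ∫ x, √(S x) ∂μ ≤ √(∫ x, S x ∂μ) :=
    Real.strictConcaveOn_sqrt.concaveOn.le_map_integral Real.continuous_sqrt.continuousOn
      isClosed_Ici (ae_of_all _ hS0) hS hsqrt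
  calc ∫ x, a x ∂μ = ∫ x, b x ∂μ + ∫ x, (a x - b x) ∂μ := by
        rw [integral_sub ha hb]
        ring
    _ ≤ ∫ x, b x ∂μ + L * ∫ x, √(S x) ∂μ := by
        rw [← integral_const_mul]
        exact add_le_add le_rfl (integral_mono (ha.sub hb) (hsqrt.const_mul L) hab)
    _ ≤ ∫ x, b x ∂μ + L * √(∫ x, S x ∂μ) := by gcongr

section StoppedProcess

variable {Ω : Type*} {mΩ : MeasurableSpace Ω} {μ : Measure Ω} {Z U : ℕ → Ω → ℝ} {σ : Ω → ℕ}
  {N : ℕ}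

theorem integrable_stopped (hσ : Measurable σ) (hσN : ∀ ω, σ ω ≤ N)
    (hZ : ∀ t, Integrable (Z t) μ) : Integrable (fun ω => Z (σ ω) ω) μ := by
  have hsum : (fun ω => Z (σ ω) ω)
      = fun ω => ∑ t ∈ Finset.range (N + 1), {ω | σ ω = t}.indicator (Z t) ω := by
    funext ω
    rw [Finset.sum_eq_single_of_mem (σ ω) (Finset.mem_range.2 (Nat.lt_succ_of_le (hσN ω)))]
    · simp
    · exact fun t _ ht => Set.indicator_of_notMem (fun h => ht h.symm) _
  rw [hsum]
  exact integrable_finsetSum _ fun t _ => (hZ t).indicator (hσ (measurableSet_singleton t))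

theorem integral_stopped_le (hσ : Measurable σ) (hσN : ∀ ω, σ ω ≤ N)
    (hZ : ∀ t, Integrable (Z t) μ) (hU : ∀ t, Integrable (U t) μ)
    (hZU : ∀ ω, Z (σ ω) ω ≤ U (σ ω) ω)
    (hstep : ∀ t < N,
      ∫ ω in {ω | t < σ ω}, U (t + 1) ω ∂μ ≤ ∫ ω in {ω | t < σ ω}, U t ω ∂μ) :
    ∫ ω, Z (σ ω) ω ∂μ ≤ ∫ ω, U 0 ω ∂μ := by
  have hZσ := integrable_stopped hσ hσN hZ
  have hstop : ∀ t, ∫ ω in {ω | σ ω = t}, Z (σ ω) ω ∂μ ≤ ∫ ω in {ω | σ ω = t}, U t ω ∂μ :=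
    fun t => setIntegral_mono_on hZσ.integrableOn (hU t).integrableOn
      (hσ (measurableSet_singleton t)) fun ω (hω : σ ω = t) => hω ▸ hZU ω
  suffices h : ∀ t ≤ N,
      ∫ ω in {ω | t ≤ σ ω}, Z (σ ω) ω ∂μ ≤ ∫ ω in {ω | t ≤ σ ω}, U t ω ∂μ by
    simpa using h 0 N.zero_le
  intro t ht
  induction ht using Nat.decreasingInduction with
  | self =>
    have hN : {ω | N ≤ σ ω} = {ω | σ ω = N} :=
      Set.ext fun ω => ⟨fun h => le_antisymm (hσN ω) h, fun h => h.ge⟩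
    exact hN ▸ hstop N
  | of_succ t ht ih =>
    have hsplit : {ω | t ≤ σ ω} = {ω | σ ω = t} ∪ {ω | t < σ ω} := by
      ext ω
      simp only [Set.mem_ofPred_eq, Set.mem_union]
      omega
    have hdisj : Disjoint {ω | σ ω = t} {ω | t < σ ω} :=
      Set.disjoint_left.2 fun ω (h₁ : σ ω = t) (h₂ : t < σ ω) => by omega
    have hlt : MeasurableSet {ω | t < σ ω} := hσ measurableSet_Ioi
    rw [hsplit, setIntegral_union hdisj hlt hZσ.integrableOn hZσ.integrableOn,
      setIntegral_union hdisj hlt (hU t).integrableOn (hU t).integrableOn]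
    exact add_le_add (hstop t) (ih.trans (hstep t ht))

end StoppedProcess

section SnellEnvelope

variable {Ω : Type*} {m0 : MeasurableSpace Ω}

/-- The conditional expectation is clipped at `C`: it is bounded by `C` only almost everywhere,
and the envelope has to be bounded everywhere to be a test function in `Bicausal`. -/
noncomputable def snellEnvelope (ℱ : Filtration ℕ m0) (μ : Measure Ω) (C : ℝ)
    (g : ℕ → Ω → ℝ) (N t : ℕ) : Ω → ℝ :=
  if t < N then fun ω => max (g t ω) (min C (μ[snellEnvelope ℱ μ C g N (t + 1) | ℱ t] ω))
  else g t
termination_by N - t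

noncomputable def snellStop (ℱ : Filtration ℕ m0) (μ : Measure Ω) (C : ℝ) (g : ℕ → Ω → ℝ)
    (N : ℕ) (ω : Ω) : ℕ :=
  sInf {t | snellEnvelope ℱ μ C g N t ω = g t ω}

variable {ℱ : Filtration ℕ m0} {μ : Measure Ω} {C : ℝ} {g : ℕ → Ω → ℝ} {N t : ℕ}

theorem snellEnvelope_of_le (h : N ≤ t) : snellEnvelope ℱ μ C g N t = g t := by
  rw [snellEnvelope, if_neg h.not_gt]

theorem snellEnvelope_of_lt (h : t < N) :
    snellEnvelope ℱ μ C g N t =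
      fun ω => max (g t ω) (min C (μ[snellEnvelope ℱ μ C g N (t + 1) | ℱ t] ω)) := by
  rw [snellEnvelope, if_pos h]

theorem le_snellEnvelope (t : ℕ) (ω : Ω) : g t ω ≤ snellEnvelope ℱ μ C g N t ω := by
  rcases lt_or_ge t N with h | h
  · rw [snellEnvelope_of_lt h]
    exact le_max_left _ _
  · rw [snellEnvelope_of_le h]

theorem abs_snellEnvelope_le (hgC : ∀ t ω, |g t ω| ≤ C) (t : ℕ) (ω : Ω) :
    |snellEnvelope ℱ μ C g N t ω| ≤ C := by
  rcases lt_or_ge t N with h | h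
  · rw [snellEnvelope_of_lt h]
    exact abs_le.2 ⟨(abs_le.1 (hgC t ω)).1.trans (le_max_left _ _),
      max_le (abs_le.1 (hgC t ω)).2 (min_le_left _ _)⟩
  · rw [snellEnvelope_of_le h]
    exact hgC t ω

theorem adapted_snellEnvelope (hg : Adapted ℱ g) : Adapted ℱ (snellEnvelope ℱ μ C g N) := by
  intro t
  rcases lt_or_ge t N with h | h
  · rw [snellEnvelope_of_lt h]
    exact (hg t).max (measurable_const.min stronglyMeasurable_condExp.measurable)
  · rw [snellEnvelope_of_le h]
    exact hg t

theorem integrable_snellEnvelope [IsFiniteMeasure μ] (hg : Adapted ℱ g)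
    (hgC : ∀ t ω, |g t ω| ≤ C) (t : ℕ) : Integrable (snellEnvelope ℱ μ C g N t) μ :=
  .of_bound ((adapted_snellEnvelope hg t).mono (ℱ.le t) le_rfl).aestronglyMeasurable C
    (ae_of_all _ (abs_snellEnvelope_le hgC t))

theorem ae_condExp_snellEnvelope_le (hgC : ∀ t ω, |g t ω| ≤ C) (t : ℕ) :
    ∀ᵐ ω ∂μ, μ[snellEnvelope ℱ μ C g N (t + 1) | ℱ t] ω ≤ C :=
  (ae_bdd_abs_condExp_of_ae_bdd_abs (ae_of_all _ (abs_snellEnvelope_le hgC (t + 1)))).mono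
    fun _ h => (abs_le.1 h).2

theorem condExp_snellEnvelope_le (hgC : ∀ t ω, |g t ω| ≤ C) (ht : t < N) :
    μ[snellEnvelope ℱ μ C g N (t + 1) | ℱ t] ≤ᵐ[μ] snellEnvelope ℱ μ C g N t := by
  filter_upwards [ae_condExp_snellEnvelope_le (ℱ := ℱ) (N := N) hgC t] with ω hω
  simp only [snellEnvelope_of_lt ht, min_eq_right hω]
  exact le_max_right _ _

theorem ae_snellEnvelope_eq_condExp_of_ne (hgC : ∀ t ω, |g t ω| ≤ C) (ht : t < N) :
    ∀ᵐ ω ∂μ, snellEnvelope ℱ μ C g N t ω ≠ g t ω →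
      snellEnvelope ℱ μ C g N t ω = μ[snellEnvelope ℱ μ C g N (t + 1) | ℱ t] ω := by
  filter_upwards [ae_condExp_snellEnvelope_le (ℱ := ℱ) (N := N) hgC t] with ω hω hne
  simp only [snellEnvelope_of_lt ht, min_eq_right hω] at hne ⊢
  exact (max_choice _ _).resolve_left hne

theorem snellEnvelope_snellStop (ω : Ω) :
    snellEnvelope ℱ μ C g N (snellStop ℱ μ C g N ω) ω = g (snellStop ℱ μ C g N ω) ω :=
  Nat.sInf_mem (s := {t | snellEnvelope ℱ μ C g N t ω = g t ω})
    ⟨N, by rw [Set.mem_ofPred_eq, snellEnvelope_of_le le_rfl]⟩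

theorem snellStop_le (ω : Ω) : snellStop ℱ μ C g N ω ≤ N :=
  Nat.sInf_le (by rw [Set.mem_ofPred_eq, snellEnvelope_of_le le_rfl])

theorem lt_snellStop_iff {ω : Ω} :
    t < snellStop ℱ μ C g N ω ↔ ∀ s ≤ t, snellEnvelope ℱ μ C g N s ω ≠ g s ω :=
  ⟨fun h _ hs => Nat.notMem_of_lt_sInf (hs.trans_lt h),
    fun h => not_le.1 fun hle => h _ hle (snellEnvelope_snellStop ω)⟩

theorem measurableSet_lt_snellStop (hg : Adapted ℱ g) (t : ℕ) :
    MeasurableSet[ℱ t] {ω | t < snellStop ℱ μ C g N ω} := by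
  simp_rw [lt_snellStop_iff, Set.ofPred_forall]
  exact .iInter fun s => .iInter fun hs =>
    (ℱ.mono hs _ (measurableSet_eq_fun (adapted_snellEnvelope hg s) (hg s))).compl

theorem measurableSet_eq_of_measurableSet_lt {τ : Ω → ℕ}
    (hτ : ∀ t, MeasurableSet[ℱ t] {ω | t < τ ω}) (t : ℕ) :
    MeasurableSet[ℱ t] {ω | τ ω = t} := by
  cases t with
  | zero =>
    convert (hτ 0).compl using 1
    ext ω
    simp [Nat.pos_iff_ne_zero]
  | succ t =>
    have h : {ω | τ ω = t + 1} = {ω | t < τ ω} \ {ω | t + 1 < τ ω} := by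
      ext ω
      simp only [Set.mem_ofPred_eq, Set.mem_sdiff]
      omega
    exact h ▸ (ℱ.mono t.le_succ _ (hτ t)).diff (hτ (t + 1))

theorem integral_snellEnvelope_le_integral_snellStop [IsFiniteMeasure μ] (hg : Adapted ℱ g)
    (hgC : ∀ t ω, |g t ω| ≤ C) :
    ∫ ω, snellEnvelope ℱ μ C g N 0 ω ∂μ ≤ ∫ ω, g (snellStop ℱ μ C g N ω) ω ∂μ := by
  have hg_int : ∀ t, Integrable (g t) μ := fun t =>
    .of_bound ((hg t).mono (ℱ.le t) le_rfl).aestronglyMeasurable C (ae_of_all _ (hgC t))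
  have hstep : ∀ t < N, ∫ ω in {ω | t < snellStop ℱ μ C g N ω}, snellEnvelope ℱ μ C g N t ω ∂μ
      = ∫ ω in {ω | t < snellStop ℱ μ C g N ω}, snellEnvelope ℱ μ C g N (t + 1) ω ∂μ := by
    intro t ht
    have hA := measurableSet_lt_snellStop (μ := μ) (C := C) (N := N) hg t
    calc _ = ∫ ω in {ω | t < snellStop ℱ μ C g N ω},
          μ[snellEnvelope ℱ μ C g N (t + 1) | ℱ t] ω ∂μ := by
          refine setIntegral_congr_ae (ℱ.le t _ hA) ?_
          filter_upwards [ae_snellEnvelope_eq_condExp_of_ne hgC ht] with ω h hω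
          exact h (lt_snellStop_iff.1 hω t le_rfl)
      _ = _ := setIntegral_condExp (ℱ.le t) (integrable_snellEnvelope hg hgC _) hA
  -- Before `snellStop` the envelope is a martingale, so the comparison runs with `-g ≤ -V`.
  have h := integral_stopped_le (Z := fun t => -g t) (U := fun t => -snellEnvelope ℱ μ C g N t)
    (measurable_of_Ioi fun t => ℱ.le t _ (measurableSet_lt_snellStop hg t)) snellStop_le
    (fun t => (hg_int t).neg) (fun t => (integrable_snellEnvelope hg hgC t).neg)
    (fun ω => neg_le_neg (snellEnvelope_snellStop ω).le)
    (fun t ht => by simp only [Pi.neg_apply, integral_neg, hstep t ht, le_refl])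
  simpa only [Pi.neg_apply, integral_neg, neg_le_neg_iff] using h

theorem setIntegral_snellEnvelope_succ_comp_snd_le {α : Type*} [MeasurableSpace α]
    [IsFiniteMeasure μ] (hg : Adapted ℱ g) (hgC : ∀ t ω, |g t ω| ≤ C) {π : Measure (α × Ω)}
    [IsFiniteMeasure π] (hπ : π.map Prod.snd = μ) {𝒢 : ℕ → MeasurableSpace (α × Ω)}
    (h𝒢 : ∀ t, 𝒢 t ≤ Prod.instMeasurableSpace) (ht : t < N)
    (hcausal : π[fun p => snellEnvelope ℱ μ C g N (t + 1) p.2 | 𝒢 t]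
      =ᵐ[π] π[fun p => snellEnvelope ℱ μ C g N (t + 1) p.2 | (ℱ t).comap Prod.snd])
    {A : Set (α × Ω)} (hA : MeasurableSet[𝒢 t] A) :
    ∫ p in A, snellEnvelope ℱ μ C g N (t + 1) p.2 ∂π
      ≤ ∫ p in A, snellEnvelope ℱ μ C g N t p.2 ∂π := by
  have hint : ∀ s, Integrable (fun p : α × Ω => snellEnvelope ℱ μ C g N s p.2) π := fun s =>
    Integrable.comp_measurable (by rw [hπ]; exact integrable_snellEnvelope hg hgC s)
      measurable_snd
  have hcond : Integrable (fun p : α × Ω => μ[snellEnvelope ℱ μ C g N (t + 1) | ℱ t] p.2) π :=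
    Integrable.comp_measurable (by rw [hπ]; exact integrable_condExp) measurable_snd
  have hle : ∀ᵐ p ∂π, μ[snellEnvelope ℱ μ C g N (t + 1) | ℱ t] p.2
      ≤ snellEnvelope ℱ μ C g N t p.2 :=
    ae_of_ae_map measurable_snd.aemeasurable
      (by rw [hπ]; exact condExp_snellEnvelope_le (ℱ := ℱ) hgC ht)
  calc _ = ∫ p in A, π[fun p => snellEnvelope ℱ μ C g N (t + 1) p.2 | 𝒢 t] p ∂π :=
        (setIntegral_condExp (h𝒢 t) (hint _) hA).symm
    _ = ∫ p in A, μ[snellEnvelope ℱ μ C g N (t + 1) | ℱ t] p.2 ∂π := by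
        refine setIntegral_congr_ae (h𝒢 t _ hA) ?_
        filter_upwards [hcausal, condExp_comp_ae_eq measurable_snd hπ (ℱ.le t)
          (integrable_snellEnvelope hg hgC _)] with p h₁ h₂ _
        rw [h₁, h₂]
    _ ≤ _ := setIntegral_mono_ae hcond.integrableOn (hint t).integrableOn hle

theorem integral_stopped_comp_snd_le_integral_snellEnvelope {α : Type*} [MeasurableSpace α]
    [IsFiniteMeasure μ] (hg : Adapted ℱ g) (hgC : ∀ t ω, |g t ω| ≤ C) {π : Measure (α × Ω)}
    [IsFiniteMeasure π] (hπ : π.map Prod.snd = μ) {𝒢 : ℕ → MeasurableSpace (α × Ω)}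
    (h𝒢 : ∀ t, 𝒢 t ≤ Prod.instMeasurableSpace)
    (hcausal : ∀ t < N, ∀ h : Ω → ℝ, Measurable h → (∃ c, ∀ ω, |h ω| ≤ c) →
      π[fun p => h p.2 | 𝒢 t] =ᵐ[π] π[fun p => h p.2 | (ℱ t).comap Prod.snd])
    {σ : α × Ω → ℕ} (hσN : ∀ p, σ p ≤ N) (hσ : ∀ t, MeasurableSet[𝒢 t] {p | t < σ p}) :
    ∫ p, g (σ p) p.2 ∂π ≤ ∫ ω, snellEnvelope ℱ μ C g N 0 ω ∂μ := by
  have hV : ∀ s, Measurable (snellEnvelope ℱ μ C g N s) := fun s =>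
    (adapted_snellEnvelope hg s).mono (ℱ.le s) le_rfl
  calc _ ≤ ∫ p, snellEnvelope ℱ μ C g N 0 p.2 ∂π :=
        integral_stopped_le (U := fun t p => snellEnvelope ℱ μ C g N t p.2)
          (measurable_of_Ioi fun t => h𝒢 t _ (hσ t)) hσN
          (fun t => .of_bound ((((hg t).mono (ℱ.le t) le_rfl).comp measurable_snd)
            |>.aestronglyMeasurable) C (ae_of_all _ fun p => hgC t p.2))
          (fun t => .of_bound (((hV t).comp measurable_snd).aestronglyMeasurable) C
            (ae_of_all _ fun p => abs_snellEnvelope_le hgC t p.2))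
          (fun p => le_snellEnvelope _ _)
          (fun t ht => setIntegral_snellEnvelope_succ_comp_snd_le hg hgC hπ h𝒢 ht
            (hcausal t ht _ (hV _) ⟨C, abs_snellEnvelope_le hgC _⟩) (hσ t))
    _ = _ := by
        rw [← integral_map_of_stronglyMeasurable measurable_snd (hV 0).stronglyMeasurable, hπ]

end SnellEnvelope

end MeasureTheory

theorem le_mul_sqrt_csInf {S : Set ℝ} (hS : S.Nonempty) {a L : ℝ} (hL : 0 ≤ L)
    (h : ∀ r ∈ S, a ≤ L * √r) : a ≤ L * √(sInf S) := by
  rcases le_or_gt a 0 with ha | ha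
  · exact ha.trans (by positivity)
  obtain ⟨r₀, hr₀⟩ := hS
  have hL' : 0 < L := lt_of_le_of_ne hL fun h0 => by
    have := h r₀ hr₀
    rw [← h0, zero_mul] at this
    linarith
  have hsq : (a / L) ^ 2 ≤ sInf S :=
    le_csInf ⟨r₀, hr₀⟩ fun r hr =>
      (Real.le_sqrt' (by positivity)).1 ((div_le_iff₀' hL').2 (h r hr))
  calc a = L * (a / L) := by field_simp
    _ ≤ L * √(sInf S) := by
        gcongr
        exact (Real.le_sqrt' (by positivity)).2 hsq

theorem Coupling.isProbabilityMeasure {α β : Type*} [MeasurableSpace α] [MeasurableSpace β]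
    {π : Measure (α × β)} {μ : Measure α} {ν : Measure β} [IsProbabilityMeasure μ]
    (h : Coupling π μ ν) : IsProbabilityMeasure π :=
  have : IsProbabilityMeasure (π.map Prod.fst) := h.1 ▸ inferInstance
  π.isProbabilityMeasure_of_map Prod.fst

section PathSpace

variable {E : Type*} [MeasurableSpace E] {T : ℕ}

theorem measurable_apply_prefixSigma {t : ℕ} (s : Fin T) (hs : (s : ℕ) < t) :
    Measurable[prefixSigma E T t] fun x : Fin T → E => x s := by
  have h : Measurable[prefixSigma E T t]
      fun (x : Fin T → E) (u : {u : Fin T // (u : ℕ) < t}) => x u :=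
    Measurable.of_comap_le le_rfl
  exact (measurable_pi_apply ⟨s, hs⟩).comp h

theorem prefixSigma_le (t : ℕ) : prefixSigma E T t ≤ MeasurableSpace.pi :=
  (measurable_pi_lambda _ fun _ => measurable_pi_apply _).comap_le

theorem prefixSigma_mono {s t : ℕ} (hst : s ≤ t) : prefixSigma E T s ≤ prefixSigma E T t := by
  have h : Measurable[prefixSigma E T t]
      fun (x : Fin T → E) (u : {u : Fin T // (u : ℕ) < s}) => x u :=
    @measurable_pi_lambda _ _ _ (prefixSigma E T t) _ _
      fun u => measurable_apply_prefixSigma u.1 (u.2.trans_le hst)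
  exact h.comap_le

def pathFiltration (E : Type*) [MeasurableSpace E] (T : ℕ) :
    Filtration ℕ (MeasurableSpace.pi : MeasurableSpace (Fin T → E)) where
  seq t := prefixSigma E T (t + 1)
  mono' _ _ h := prefixSigma_mono (Nat.succ_le_succ h)
  le' t := prefixSigma_le (t + 1)

theorem Bicausal.swap {π : Measure ((Fin T → E) × (Fin T → E))} {μ ν : Measure (Fin T → E)}
    [IsFiniteMeasure π] (h : Bicausal π μ ν) : Bicausal (π.map Prod.swap) ν μ := by
  obtain ⟨⟨hμ, hν⟩, hcausal⟩ := h
  have hswap : (π.map Prod.swap).map Prod.swap = π := by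
    rw [Measure.map_map measurable_swap measurable_swap, Prod.swap_swap_eq, Measure.map_id]
  refine ⟨⟨by rwa [Measure.map_map measurable_fst measurable_swap],
    by rwa [Measure.map_map measurable_snd measurable_swap]⟩, fun t h₁ h₂ => ?_⟩
  have hle := prefixSigma_le (E := E) (T := T) t
  have hsup := sup_le_sup (MeasurableSpace.comap_mono (g := @Prod.fst (Fin T → E) (Fin T → E)) hle)
    (MeasurableSpace.comap_mono (g := @Prod.snd (Fin T → E) (Fin T → E)) hle)
  refine ⟨fun F hF ⟨c, hc⟩ => ?_, fun F hF ⟨c, hc⟩ => ?_⟩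
  · have h := condExp_comp_ae_eq_of_ae_eq measurable_swap hswap hsup
      ((MeasurableSpace.comap_mono hle).trans measurable_snd.comap_le)
      (.of_bound (hF.comp measurable_snd).aestronglyMeasurable c (ae_of_all _ fun p => hc p.2))
      ((hcausal t h₁ h₂).2 F hF ⟨c, hc⟩)
    simpa only [MeasurableSpace.comap_sup, MeasurableSpace.comap_comp, Function.comp_def,
      Prod.fst_swap, Prod.snd_swap, sup_comm] using h
  · have h := condExp_comp_ae_eq_of_ae_eq measurable_swap hswap hsup
      ((MeasurableSpace.comap_mono hle).trans measurable_fst.comap_le)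
      (.of_bound (hF.comp measurable_fst).aestronglyMeasurable c (ae_of_all _ fun p => hc p.1))
      ((hcausal t h₁ h₂).1 F hF ⟨c, hc⟩)
    simpa only [MeasurableSpace.comap_sup, MeasurableSpace.comap_comp, Function.comp_def,
      Prod.fst_swap, Prod.snd_swap, sup_comm] using h

theorem bicausal_prod (μ ν : Measure (Fin T → E)) [IsProbabilityMeasure μ]
    [IsProbabilityMeasure ν] : Bicausal (μ.prod ν) μ ν := by
  refine ⟨⟨by simp, by simp⟩, fun t _ _ => ?_⟩
  have hle := prefixSigma_le (E := E) (T := T) t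
  have hfst : ∀ (ρ ρ' : Measure (Fin T → E)) [IsProbabilityMeasure ρ] [IsProbabilityMeasure ρ']
      (F : (Fin T → E) → ℝ), Integrable F ρ →
      (ρ.prod ρ')[fun p => F p.1 | (prefixSigma E T t).comap Prod.fst ⊔
          (prefixSigma E T t).comap Prod.snd]
        =ᵐ[ρ.prod ρ'] (ρ.prod ρ')[fun p => F p.1 | (prefixSigma E T t).comap Prod.fst] :=
    fun ρ ρ' _ _ F hF => (condExp_comp_fst_prod_ae_eq hle hle hF).trans
      (condExp_comp_ae_eq measurable_fst (by simp) hle hF).symm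
  refine ⟨fun F hF ⟨c, hc⟩ => hfst μ ν F (.of_bound hF.aestronglyMeasurable c (ae_of_all _ hc)),
    fun F hF ⟨c, hc⟩ => ?_⟩
  have hF' : Integrable F ν := .of_bound hF.aestronglyMeasurable c (ae_of_all _ hc)
  have h := condExp_comp_ae_eq_of_ae_eq measurable_swap Measure.prod_swap
    (sup_le_sup (MeasurableSpace.comap_mono hle) (MeasurableSpace.comap_mono hle))
    ((MeasurableSpace.comap_mono hle).trans measurable_fst.comap_le) (hF'.comp_fst μ)
    (hfst ν μ F hF')
  simpa only [MeasurableSpace.comap_sup, MeasurableSpace.comap_comp, Function.comp_def,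
    Prod.fst_swap, Prod.snd_swap, sup_comm] using h

end PathSpace

section OptimalStopping

variable {d T : ℕ}

theorem isStoppingTimePath_const (s : Fin T) : IsStoppingTimePath fun _ : PathSp d T => s :=
  fun _ => MeasurableSet.const _

theorem IsStoppingTimePath.measurableSet_lt {τ : PathSp d T → Fin T} (hτ : IsStoppingTimePath τ)
    (t : ℕ) : MeasurableSet[pathFiltration (Fin d → ℝ) T t] {x | t < (τ x : ℕ)} := by
  have h : {x | t < (τ x : ℕ)} = ⋂ (s : Fin T) (_ : (s : ℕ) ≤ t), {x | τ x = s}ᶜ := by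
    ext x
    simp only [Set.mem_ofPred_eq, Set.mem_iInter, Set.mem_compl_iff]
    exact ⟨fun h s hs hx => by omega, fun h => not_le.1 fun hle => h _ hle rfl⟩
  rw [h]
  exact .iInter fun s => .iInter fun hs => (prefixSigma_mono (by omega) _ (hτ s)).compl

theorem IsStoppingTimePath.measurable {τ : PathSp d T → Fin T} (hτ : IsStoppingTimePath τ) :
    Measurable fun x => (τ x : ℕ) :=
  measurable_of_Ioi fun t => (pathFiltration (Fin d → ℝ) T).le t _ (hτ.measurableSet_lt t)

theorem isStoppingTimePath_of_measurableSet_lt {σ : PathSp d T → ℕ} (hσT : ∀ x, σ x < T)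
    (hσ : ∀ t, MeasurableSet[pathFiltration (Fin d → ℝ) T t] {x | t < σ x}) :
    IsStoppingTimePath fun x => (⟨σ x, hσT x⟩ : Fin T) := by
  intro t
  have h : {x | (⟨σ x, hσT x⟩ : Fin T) = t} = {x | σ x = t} := by simp [Fin.ext_iff]
  exact h ▸ measurableSet_eq_of_measurableSet_lt hσ t

theorem integral_le_stopValue {f : (Fin d → ℝ) → Fin T → ℝ} {C : ℝ} (hC : ∀ u t, |f u t| ≤ C)
    (μ : Measure (PathSp d T)) [IsProbabilityMeasure μ] {τ : PathSp d T → Fin T}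
    (hτ : IsStoppingTimePath τ) : ∫ x, f (x (τ x)) (τ x) ∂μ ≤ stopValue f μ := by
  refine le_csSup ⟨C, ?_⟩ ⟨τ, hτ, rfl⟩
  rintro _ ⟨τ', -, rfl⟩
  have h := norm_integral_le_of_norm_le_const (μ := μ) (f := fun x => f (x (τ' x)) (τ' x))
    (ae_of_all _ fun x => hC (x (τ' x)) (τ' x))
  exact (le_abs_self _).trans (by simpa using h)

theorem continuous_of_abs_sub_le_mul_sqrt {F : (Fin d → ℝ) → ℝ} {L : ℝ}
    (h : ∀ u v, |F u - F v| ≤ L * √(∑ i, (u i - v i) ^ 2)) : Continuous F := by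
  refine continuous_iff_continuousAt.2 fun v => tendsto_iff_dist_tendsto_zero.2 ?_
  refine squeeze_zero (fun _ => dist_nonneg) (fun u => h u v) ?_
  have hc : Continuous fun u : Fin d → ℝ => L * √(∑ i, (u i - v i) ^ 2) := by fun_prop
  simpa using hc.tendsto v

/-- `Fin.ofNat T t` is `t` reduced mod `T`; this only matters past the horizon `T - 1`. -/
def pathPayoff [NeZero T] (f : (Fin d → ℝ) → Fin T → ℝ) (t : ℕ) (x : PathSp d T) : ℝ :=
  f (x (Fin.ofNat T t)) (Fin.ofNat T t)

theorem pathPayoff_val [NeZero T] (f : (Fin d → ℝ) → Fin T → ℝ) (s : Fin T) (x : PathSp d T) :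
    pathPayoff f s x = f (x s) s := by
  simp [pathPayoff]

theorem adapted_pathPayoff [NeZero T] {f : (Fin d → ℝ) → Fin T → ℝ}
    (hf : ∀ s, Continuous fun u => f u s) :
    Adapted (pathFiltration (Fin d → ℝ) T) (pathPayoff f) := fun t =>
  (hf _).measurable.comp (measurable_apply_prefixSigma _
    ((Fin.val_ofNat T t).trans_lt (Nat.lt_succ_of_le (Nat.mod_le t T))))

theorem integrable_pathPayoff_stopped [NeZero T] {f : (Fin d → ℝ) → Fin T → ℝ} {C : ℝ}
    (hC : ∀ u t, |f u t| ≤ C) (hf : ∀ s, Continuous fun u => f u s) {α : Type*}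
    [MeasurableSpace α] {ρ : Measure α} [IsFiniteMeasure ρ] {τ : PathSp d T → Fin T}
    (hτ : IsStoppingTimePath τ) {j k : α → PathSp d T} (hj : Measurable j) (hk : Measurable k) :
    Integrable (fun a => pathPayoff f (τ (j a)) (k a)) ρ :=
  integrable_stopped (hτ.measurable.comp hj) (fun a => Nat.le_sub_one_of_lt (τ (j a)).2)
    fun t => .of_bound ((((adapted_pathPayoff hf t).mono (prefixSigma_le _) le_rfl).comp hk)
      |>.aestronglyMeasurable) C (ae_of_all _ fun _ => hC _ _)

theorem abs_pathPayoff_sub_le [NeZero T] {f : (Fin d → ℝ) → Fin T → ℝ} {Lip : ℝ}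
    (hLip : 0 ≤ Lip)
    (hlip : ∀ (t : Fin T) (u v : Fin d → ℝ), |f u t - f v t| ≤ Lip * √(∑ i, (u i - v i) ^ 2))
    (t : ℕ) (x y : PathSp d T) :
    |pathPayoff f t x - pathPayoff f t y| ≤ Lip * √(∑ s, ∑ i, (x s i - y s i) ^ 2) :=
  (hlip _ _ _).trans (mul_le_mul_of_nonneg_left (Real.sqrt_le_sqrt
    (Finset.single_le_sum (f := fun s => ∑ i, (x s i - y s i) ^ 2)
      (fun _ _ => Finset.sum_nonneg fun _ _ => sq_nonneg _) (Finset.mem_univ _))) hLip)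

theorem integrable_sum_sq_sub {μ ν : Measure (PathSp d T)} (hμ : FinSndMoment μ)
    (hν : FinSndMoment ν) {π : Measure (PathSp d T × PathSp d T)} (h : Coupling π μ ν) :
    Integrable (fun p : PathSp d T × PathSp d T => ∑ t, ∑ i, (p.1 t i - p.2 t i) ^ 2) π := by
  have h₁ : Integrable (fun p : PathSp d T × PathSp d T => ∑ t, ∑ i, (p.1 t i) ^ 2) π :=
    Integrable.comp_measurable (g := fun x : PathSp d T => ∑ t, ∑ i, (x t i) ^ 2)
      (by rw [h.1]; exact hμ) measurable_fst
  have h₂ : Integrable (fun p : PathSp d T × PathSp d T => ∑ t, ∑ i, (p.2 t i) ^ 2) π :=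
    Integrable.comp_measurable (g := fun x : PathSp d T => ∑ t, ∑ i, (x t i) ^ 2)
      (by rw [h.2]; exact hν) measurable_snd
  refine ((h₁.const_mul 2).add (h₂.const_mul 2)).mono' (by fun_prop)
    (ae_of_all _ fun p => ?_)
  rw [Real.norm_of_nonneg (by positivity)]
  calc ∑ t, ∑ i, (p.1 t i - p.2 t i) ^ 2
      ≤ ∑ t, ∑ i, (2 * (p.1 t i) ^ 2 + 2 * (p.2 t i) ^ 2) := by
        gcongr with t _ i _
        nlinarith [sq_nonneg (p.1 t i + p.2 t i)]
    _ = _ := by simp only [Finset.sum_add_distrib, ← Finset.mul_sum, Pi.add_apply]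

theorem integral_pathPayoff_comp_snd_le_stopValue [NeZero T] {f : (Fin d → ℝ) → Fin T → ℝ}
    {C : ℝ} (hC : ∀ u t, |f u t| ≤ C) (hf : ∀ s, Continuous fun u => f u s)
    {μ ν : Measure (PathSp d T)} [IsProbabilityMeasure ν] {π : Measure (PathSp d T × PathSp d T)}
    [IsFiniteMeasure π] (hπ : Bicausal π μ ν) {τ : PathSp d T → Fin T}
    (hτ : IsStoppingTimePath τ) :
    ∫ p, pathPayoff f (τ p.1) p.2 ∂π ≤ stopValue f ν := by
  set ℱ := pathFiltration (Fin d → ℝ) T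
  have hg := adapted_pathPayoff hf
  have hgC : ∀ t x, |pathPayoff f t x| ≤ C := fun _ _ => hC _ _
  have hT : T - 1 < T := Nat.sub_one_lt (NeZero.ne T)
  set τ' : PathSp d T → Fin T := fun y =>
    ⟨snellStop ℱ ν C (pathPayoff f) (T - 1) y, (snellStop_le y).trans_lt hT⟩
  calc ∫ p, pathPayoff f (τ p.1) p.2 ∂π
      ≤ ∫ y, snellEnvelope ℱ ν C (pathPayoff f) (T - 1) 0 y ∂ν :=
        integral_stopped_comp_snd_le_integral_snellEnvelope hg hgC hπ.1.2
          (𝒢 := fun t => (ℱ t).comap Prod.fst ⊔ (ℱ t).comap Prod.snd)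
          (fun t => sup_le_sup (MeasurableSpace.comap_mono (ℱ.le t))
            (MeasurableSpace.comap_mono (ℱ.le t)))
          (fun t ht h hh hb => (hπ.2 (t + 1) (by omega) (by omega)).2 h hh hb)
          (fun p => Nat.le_sub_one_of_lt (τ p.1).2)
          (fun t => le_sup_left (a := (ℱ t).comap Prod.fst) _ ⟨_, hτ.measurableSet_lt t, rfl⟩)
    _ ≤ ∫ y, pathPayoff f (τ' y) y ∂ν := integral_snellEnvelope_le_integral_snellStop hg hgC
    _ ≤ stopValue f ν := by
        simp only [pathPayoff_val]
        exact integral_le_stopValue hC ν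
          (isStoppingTimePath_of_measurableSet_lt _ (measurableSet_lt_snellStop hg))

theorem stopValue_le_add_mul_sqrt [NeZero T] {f : (Fin d → ℝ) → Fin T → ℝ} {Lip C : ℝ}
    (hLip : 0 ≤ Lip) (hC : ∀ u t, |f u t| ≤ C)
    (hlip : ∀ (t : Fin T) (u v : Fin d → ℝ), |f u t - f v t| ≤ Lip * √(∑ i, (u i - v i) ^ 2))
    {μ ν : Measure (PathSp d T)} [IsProbabilityMeasure μ] [IsProbabilityMeasure ν]
    (hμ : FinSndMoment μ) (hν : FinSndMoment ν) {π : Measure (PathSp d T × PathSp d T)}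
    (hπ : Bicausal π μ ν) :
    stopValue f μ ≤ stopValue f ν + Lip * √(∫ p, ∑ t, ∑ i, (p.1 t i - p.2 t i) ^ 2 ∂π) := by
  have := hπ.1.isProbabilityMeasure
  have hf : ∀ s, Continuous fun u => f u s := fun s => continuous_of_abs_sub_le_mul_sqrt (hlip s)
  refine csSup_le ⟨_, 0, isStoppingTimePath_const 0, rfl⟩ ?_
  rintro _ ⟨τ, hτ, rfl⟩
  have hμτ : Integrable (fun x => pathPayoff f (τ x) x) (π.map Prod.fst) :=
    integrable_pathPayoff_stopped hC hf hτ measurable_id measurable_id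
  calc ∫ x, f (x (τ x)) (τ x) ∂μ = ∫ x, pathPayoff f (τ x) x ∂μ := by
        simp only [pathPayoff_val]
    _ = ∫ p, pathPayoff f (τ p.1) p.1 ∂π := by
        rw [← hπ.1.1, integral_map measurable_fst.aemeasurable hμτ.aestronglyMeasurable]
    _ ≤ ∫ p, pathPayoff f (τ p.1) p.2 ∂π
          + Lip * √(∫ p, ∑ t, ∑ i, (p.1 t i - p.2 t i) ^ 2 ∂π) :=
        integral_le_integral_add_mul_sqrt hLip
          (integrable_pathPayoff_stopped hC hf hτ measurable_fst measurable_fst)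
          (integrable_pathPayoff_stopped hC hf hτ measurable_fst measurable_snd)
          (integrable_sum_sq_sub hμ hν hπ.1) (fun _ => by positivity)
          (fun _ => (le_abs_self _).trans (abs_pathPayoff_sub_le hLip hlip _ _ _))
    _ ≤ _ := add_le_add (integral_pathPayoff_comp_snd_le_stopValue hC hf hπ hτ) le_rfl

theorem AW2_comm (μ ν : Measure (PathSp d T)) [IsProbabilityMeasure μ] [IsProbabilityMeasure ν] :
    AW2 μ ν = AW2 ν μ := by
  have key : ∀ (μ ν : Measure (PathSp d T)) [IsProbabilityMeasure μ],
      {r | ∃ π, Bicausal π μ ν ∧ r = ∫ p, ∑ t, ∑ i, (p.1 t i - p.2 t i) ^ 2 ∂π}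
        ⊆ {r | ∃ π, Bicausal π ν μ ∧ r = ∫ p, ∑ t, ∑ i, (p.1 t i - p.2 t i) ^ 2 ∂π} := by
    rintro μ ν _ _ ⟨π, hπ, rfl⟩
    have := hπ.1.isProbabilityMeasure
    refine ⟨π.map Prod.swap, hπ.swap, ?_⟩
    rw [integral_map measurable_swap.aemeasurable (by fun_prop)]
    refine integral_congr_ae (ae_of_all _ fun p =>
      Finset.sum_congr rfl fun t _ => Finset.sum_congr rfl fun i _ => ?_)
    simp only [Prod.fst_swap, Prod.snd_swap]
    ring
  rw [AW2, AW2, AW2sq, AW2sq, (key μ ν).antisymm (key ν μ)]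

theorem stopValue_sub_le_mul_AW2 {f : (Fin d → ℝ) → Fin T → ℝ} {Lip : ℝ} (hLip : 0 ≤ Lip)
    (hbdd : ∃ C, ∀ u t, |f u t| ≤ C)
    (hlip : ∀ (t : Fin T) (u v : Fin d → ℝ), |f u t - f v t| ≤ Lip * √(∑ i, (u i - v i) ^ 2))
    (μ ν : Measure (PathSp d T)) [IsProbabilityMeasure μ] [IsProbabilityMeasure ν]
    (hμ : FinSndMoment μ) (hν : FinSndMoment ν) :
    stopValue f μ - stopValue f ν ≤ Lip * AW2 μ ν := by
  rcases Nat.eq_zero_or_pos T with rfl | hT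
  · have h : ∀ ρ : Measure (PathSp d 0), stopValue f ρ = 0 := fun ρ => by simp [stopValue]
    rw [h, h, sub_self]
    exact mul_nonneg hLip (Real.sqrt_nonneg _)
  · have : NeZero T := ⟨hT.ne'⟩
    obtain ⟨C, hC⟩ := hbdd
    rw [AW2, AW2sq]
    refine le_mul_sqrt_csInf ?_ hLip ?_
    · exact ⟨_, _, bicausal_prod μ ν, rfl⟩
    · rintro _ ⟨π, hπ, rfl⟩
      linarith [stopValue_le_add_mul_sqrt hLip hC hlip hμ hν hπ]

end OptimalStopping

/-- **Robustness of optimal stopping.** If `f` is bounded and `L`-Lipschitz in its first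
argument (uniformly in time), then `|v(μ) - v(ν)| ≤ L · AW₂(μ, ν)`. -/
theorem optimal_stopping_robust {d T : ℕ} (f : (Fin d → ℝ) → Fin T → ℝ) (Lip : ℝ)
    (hLip : 0 ≤ Lip)
    (hbdd : ∃ C, ∀ u t, |f u t| ≤ C)
    (hlip : ∀ (t : Fin T) (u v : Fin d → ℝ),
      |f u t - f v t| ≤ Lip * Real.sqrt (∑ i, (u i - v i) ^ 2))
    (μ ν : Measure (PathSp d T)) [IsProbabilityMeasure μ] [IsProbabilityMeasure ν]
    (hμ : FinSndMoment μ) (hν : FinSndMoment ν) :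
    |stopValue f μ - stopValue f ν| ≤ Lip * AW2 μ ν :=
  abs_sub_le_iff.2 ⟨stopValue_sub_le_mul_AW2 hLip hbdd hlip μ ν hμ hν,
    AW2_comm μ ν ▸ stopValue_sub_le_mul_AW2 hLip hbdd hlip ν μ hν hμ⟩
end

section
/- Let (W_t)_{t∈[0,1]} be a standard Brownian motion, Z ∼ N(0,1) independent of W, δ ∈ (0,1), and let X be the fake Brownian motion built from W, Z, δ. Then X_δ = √δ · X_1 almost surely; moreover the payoff of the strategy that goes long one unit of X when X_δ > 0 and short when X_δ < 0 satisfies sign(X_δ)(X_1 − X_δ) = (1 − √δ)|X_1| ≥ 0 almost surely, and E[sign(X_δ)(X_1 − X_δ)] > 0, so this strategy is an arbitrage. -/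
/-!
STATEMENT 9 (The fake Brownian motion admits arbitrage: `X_δ = √δ · X_1` a.s. and the
long/short strategy based on the sign of `X_δ` has a.s. nonnegative, strictly positive
expected payoff).
-/

open MeasureTheory ProbabilityTheory

variable {Ω : Type*} [MeasurableSpace Ω]

/-- `W` is a standard Brownian motion on `[0,1]` under `P`. -/
structure IsStdBM (P : Measure Ω) (W : ℝ → Ω → ℝ) : Prop where
  meas : ∀ t, Measurable (W t)
  start : ∀ᵐ ω ∂P, W 0 ω = 0
  cont : ∀ᵐ ω ∂P, Continuous fun t => W t ω
  indep_incr : ∀ (n : ℕ) (t : Fin (n + 1) → ℝ), Monotone t → (∀ i, 0 ≤ t i) →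
    iIndepFun
      (fun i : Fin n => fun ω => W (t i.succ) ω - W (t i.castSucc) ω) P
  gauss_incr : ∀ s t : ℝ, 0 ≤ s → s ≤ t →
    P.map (fun ω => W t ω - W s ω) = gaussianReal 0 ((t - s).toNNReal)

/-- The fake Brownian motion built from `W`, `Z` and `δ`. -/
noncomputable def fakeBM (W : ℝ → Ω → ℝ) (Z : Ω → ℝ) (δ : ℝ) (t : ℝ) (ω : Ω) : ℝ :=
  if t ≤ δ then (t / Real.sqrt δ) * Z ω
  else W t ω + ((t - δ) / (1 - δ)) * (Z ω - W 1 ω)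
    + ((1 - t) / (1 - δ)) * (Real.sqrt δ * Z ω - W δ ω)

/-- `Z` is independent of the Brownian motion `W` (on `[0,1]`). -/
def IndepOfBM (P : Measure Ω) (W : ℝ → Ω → ℝ) (Z : Ω → ℝ) : Prop :=
  Indep (MeasurableSpace.comap Z inferInstance)
    (⨆ s ∈ Set.Icc (0 : ℝ) 1, MeasurableSpace.comap (W s) inferInstance) P


/-!
Both `X_δ` and `X_1` are deterministic multiples of `Z`: `X_δ = √δ Z` and `X_1 = Z`, whatever `W`
is. Hence `sign(X_δ) = sign(Z)` and the payoff is `sign(Z)(Z - √δ Z) = (1 - √δ)|Z|`, whose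
expectation is positive because the Gaussian `Z` is not a.s. zero.
-/

open scoped NNReal

lemma Real.sign_mul_mul_sub_eq_mul_abs {c : ℝ} (hc : 0 < c) (z : ℝ) :
    Real.sign (c * z) * (z - c * z) = (1 - c) * |z| := by
  rcases lt_trichotomy z 0 with hz | rfl | hz
  · rw [Real.sign_of_neg (mul_neg_of_pos_of_neg hc hz), abs_of_neg hz]; ring
  · simp
  · rw [Real.sign_of_pos (mul_pos hc hz), abs_of_pos hz]; ring

lemma integral_abs_gaussianReal_pos (m : ℝ) {v : ℝ≥0} (hv : v ≠ 0) :
    0 < ∫ x, |x| ∂gaussianReal m v := by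
  have hint : Integrable (fun x : ℝ => |x|) (gaussianReal m v) :=
    ((memLp_id_gaussianReal 1).integrable le_rfl).abs
  rw [integral_pos_iff_support_of_nonneg (fun x => abs_nonneg x) hint]
  have hsupp : Function.support (fun x : ℝ => |x|) = {0}ᶜ := by
    ext x; simp
  rw [hsupp, measure_compl (measurableSet_singleton 0) (measure_ne_top _ _),
    gaussianReal_absolutelyContinuous m hv (measure_singleton 0)]
  simp

lemma integral_abs_pos_of_map_eq_gaussianReal {P : Measure Ω} {Z : Ω → ℝ}
    (hZmeas : Measurable Z) {m : ℝ} {v : ℝ≥0} (hZ : P.map Z = gaussianReal m v) (hv : v ≠ 0) :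
    0 < ∫ ω, |Z ω| ∂P := by
  rw [← integral_map hZmeas.aemeasurable continuous_abs.aestronglyMeasurable, hZ]
  exact integral_abs_gaussianReal_pos m hv

section fakeBM

variable {α : Type*} (W : ℝ → α → ℝ) (Z : α → ℝ) (ω : α)

lemma fakeBM_self (δ : ℝ) : fakeBM W Z δ δ ω = Real.sqrt δ * Z ω := by
  rw [fakeBM, if_pos le_rfl, Real.div_sqrt]

lemma fakeBM_one {δ : ℝ} (hδ1 : δ < 1) : fakeBM W Z δ 1 ω = Z ω := by
  have h1δ : 1 - δ ≠ 0 := sub_ne_zero.mpr hδ1.ne'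
  rw [fakeBM, if_neg hδ1.not_ge, div_self h1δ, sub_self, zero_div]
  ring

lemma fakeBM_payoff_eq {δ : ℝ} (hδ : 0 < δ) (hδ1 : δ < 1) :
    Real.sign (fakeBM W Z δ δ ω) * (fakeBM W Z δ 1 ω - fakeBM W Z δ δ ω) =
      (1 - Real.sqrt δ) * |fakeBM W Z δ 1 ω| := by
  rw [fakeBM_self, fakeBM_one W Z ω hδ1]
  exact Real.sign_mul_mul_sub_eq_mul_abs (Real.sqrt_pos.mpr hδ) (Z ω)

end fakeBM

theorem fakeBM_arbitrage_general (P : Measure Ω)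
    (W : ℝ → Ω → ℝ) (Z : Ω → ℝ) (hZmeas : Measurable Z)
    (hZ : P.map Z = gaussianReal 0 1)
    (δ : ℝ) (hδ : 0 < δ) (hδ1 : δ < 1) :
    (∀ᵐ ω ∂P, fakeBM W Z δ δ ω = Real.sqrt δ * fakeBM W Z δ 1 ω) ∧
    (∀ᵐ ω ∂P,
      Real.sign (fakeBM W Z δ δ ω) * (fakeBM W Z δ 1 ω - fakeBM W Z δ δ ω) =
        (1 - Real.sqrt δ) * |fakeBM W Z δ 1 ω| ∧
      0 ≤ Real.sign (fakeBM W Z δ δ ω) * (fakeBM W Z δ 1 ω - fakeBM W Z δ δ ω)) ∧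
    0 < ∫ ω, Real.sign (fakeBM W Z δ δ ω) * (fakeBM W Z δ 1 ω - fakeBM W Z δ δ ω) ∂P := by
  have hsqrt_lt_one : Real.sqrt δ < 1 := (Real.sqrt_lt' one_pos).mpr (by rwa [one_pow])
  refine ⟨.of_forall fun ω => by rw [fakeBM_self, fakeBM_one W Z ω hδ1],
    .of_forall fun ω => ⟨fakeBM_payoff_eq W Z ω hδ hδ1, ?_⟩, ?_⟩
  · rw [fakeBM_payoff_eq W Z ω hδ hδ1]
    exact mul_nonneg (sub_nonneg.mpr hsqrt_lt_one.le) (abs_nonneg _)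
  · rw [integral_congr_ae (.of_forall (fakeBM_payoff_eq W Z · hδ hδ1))]
    simp only [fakeBM_one W Z _ hδ1, integral_const_mul]
    exact mul_pos (sub_pos.mpr hsqrt_lt_one)
      (integral_abs_pos_of_map_eq_gaussianReal hZmeas hZ one_ne_zero)

/-- **Arbitrage in the fake Brownian motion.** Almost surely `X_δ = √δ · X_1`; the payoff
of going long one unit of `X` when `X_δ > 0` and short when `X_δ < 0` satisfies
`sign(X_δ)(X_1 - X_δ) = (1 - √δ)|X_1| ≥ 0` a.s., and its expectation is strictly
positive, so the strategy is an arbitrage. -/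
theorem fakeBM_arbitrage (P : Measure Ω) [IsProbabilityMeasure P]
    (W : ℝ → Ω → ℝ) (Z : Ω → ℝ) (hW : IsStdBM P W) (hZmeas : Measurable Z)
    (hZ : P.map Z = gaussianReal 0 1) (hZW : IndepOfBM P W Z)
    (δ : ℝ) (hδ : 0 < δ) (hδ1 : δ < 1) :
    (∀ᵐ ω ∂P, fakeBM W Z δ δ ω = Real.sqrt δ * fakeBM W Z δ 1 ω) ∧
    (∀ᵐ ω ∂P,
      Real.sign (fakeBM W Z δ δ ω) * (fakeBM W Z δ 1 ω - fakeBM W Z δ δ ω) =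
        (1 - Real.sqrt δ) * |fakeBM W Z δ 1 ω| ∧
      0 ≤ Real.sign (fakeBM W Z δ δ ω) * (fakeBM W Z δ 1 ω - fakeBM W Z δ δ ω)) ∧
    0 < ∫ ω, Real.sign (fakeBM W Z δ δ ω) * (fakeBM W Z δ 1 ω - fakeBM W Z δ δ ω) ∂P :=
  fakeBM_arbitrage_general P W Z hZmeas hZ δ hδ hδ1
end
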